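/- arXiv:1604.05694 — 7 statements merged into one kernel-verified Lean document; each statement's English description precedes it below -/
import Mathlib

section
/- Let C ⊆ ℝⁿ be a nonempty closed set and x a point where the projection P_C(x) onto C is single-valued. Then the function q(x) = (1/2) dist(x, C)² is differentiable at x with ∇q(x) = x − P_C(x). -/
/-!
For nearest points `p` of `x` and `q` of `y`, testing `dist(y, C)` against `p` and
`dist(x, C)` against `q` gives
`⟪x - q, y - x⟫ + ½‖y - x‖² ≤ ½ dist(y, C)² - ½ dist(x, C)² ≤ ⟪x - p, y - x⟫ + ½‖y - x‖²`,
so `x - p` is the gradient as soon as nearest points `q` of `y` tend to `p` when `y → x`.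
That continuity holds when the nearest point of `x` is unique: nearest points of nearby `y` stay
in a compact set, and each of their cluster points is a nearest point of `x`.
-/

open Metric Filter Topology Asymptotics

open scoped RealInnerProductSpace

def IsNearestPoint {E : Type*} [SeminormedAddCommGroup E] (C : Set E) (x p : E) : Prop :=
  p ∈ C ∧ ∀ y ∈ C, ‖x - p‖ ≤ ‖x - y‖

section Metric

variable {E : Type*} [SeminormedAddCommGroup E] {C : Set E} {x y p q : E}

theorem IsNearestPoint.infDist_eq (hp : IsNearestPoint C x p) : infDist x C = ‖x - p‖ := by
  refine le_antisymm (dist_eq_norm x p ▸ infDist_le_dist_of_mem hp.1) ?_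
  exact (le_infDist ⟨p, hp.1⟩).2 fun z hz => dist_eq_norm x z ▸ hp.2 z hz

theorem isNearestPoint_of_dist_le (hp : p ∈ C) (h : dist x p ≤ infDist x C) :
    IsNearestPoint C x p :=
  ⟨hp, fun z hz => by
    simpa only [dist_eq_norm] using h.trans (infDist_le_dist_of_mem hz)⟩

theorem IsClosed.exists_isNearestPoint [ProperSpace E] (hC : IsClosed C) (hne : C.Nonempty)
    (x : E) : ∃ p, IsNearestPoint C x p :=
  let ⟨p, hp, hd⟩ := hC.exists_infDist_eq_dist hne x
  ⟨p, isNearestPoint_of_dist_le hp hd.ge⟩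

theorem IsNearestPoint.dist_le (hq : IsNearestPoint C y q) (x : E) :
    dist x q ≤ infDist x C + 2 * dist x y := by
  have hyq : dist y q = infDist y C := by rw [hq.infDist_eq, dist_eq_norm]
  have hyx : infDist y C ≤ infDist x C + dist y x := infDist_le_infDist_add_dist
  linarith [dist_triangle x y q, dist_comm x y]

theorem tendsto_of_isNearestPoint [ProperSpace E] {P : E → E} (hC : IsClosed C)
    (hP : ∀ y, IsNearestPoint C y (P y)) (huniq : ∀ q, IsNearestPoint C x q → q = p) :
    Tendsto P (𝓝 x) (𝓝 p) := by
  have hnear : ∀ ε > 0, ∀ᶠ y in 𝓝 x, P y ∈ C ∩ closedBall x (infDist x C + ε) := by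
    intro ε hε
    filter_upwards [closedBall_mem_nhds x (half_pos hε)] with y hy
    rw [mem_closedBall] at hy
    refine ⟨(hP y).1, ?_⟩
    rw [mem_closedBall, dist_comm]
    linarith [(hP y).dist_le x, dist_comm x y]
  refine ((isCompact_closedBall x _).inter_left hC).tendsto_nhds_of_unique_mapClusterPt
    (hnear 1 one_pos) fun q _ hq => huniq q ?_
  refine isNearestPoint_of_dist_le
    (hC.mem_of_mapClusterPt hq ((hnear 1 one_pos).mono fun _ h => h.1)) ?_
  refine le_of_forall_pos_le_add fun ε hε => ?_
  have hqε := isClosed_closedBall.mem_of_mapClusterPt hq ((hnear ε hε).mono fun _ h => h.2)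
  rwa [mem_closedBall, dist_comm] at hqε

end Metric

section InnerProduct

variable {E : Type*} [NormedAddCommGroup E] [InnerProductSpace ℝ E] {C : Set E} {x y p q : E}

theorem norm_sub_sq_eq_norm_sub_sq_add (x y z : E) :
    ‖y - z‖ ^ 2 = ‖x - z‖ ^ 2 + 2 * ⟪x - z, y - x⟫ + ‖y - x‖ ^ 2 := by
  rw [← norm_add_sq_real, sub_add_sub_cancel']

theorem IsNearestPoint.abs_half_sq_infDist_sub_sub_inner_le (hp : IsNearestPoint C x p)
    (hq : IsNearestPoint C y q) :
    |1 / 2 * infDist y C ^ 2 - 1 / 2 * infDist x C ^ 2 - ⟪x - p, y - x⟫| ≤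
      (‖q - p‖ + ‖y - x‖) * ‖y - x‖ := by
  have hyp : ‖y - q‖ ≤ ‖y - p‖ := hq.2 p hp.1
  have hxq : ‖x - p‖ ≤ ‖x - q‖ := hp.2 q hq.1
  have hcs : ⟪q - p, y - x⟫ ≤ ‖q - p‖ * ‖y - x‖ := real_inner_le_norm _ _
  have hexp_p := norm_sub_sq_eq_norm_sub_sq_add x y p
  have hexp_q := norm_sub_sq_eq_norm_sub_sq_add x y q
  simp only [inner_sub_left] at hcs hexp_p hexp_q ⊢
  rw [hp.infDist_eq, hq.infDist_eq, abs_le]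
  have hqp := mul_nonneg (norm_nonneg (q - p)) (norm_nonneg (y - x))
  constructor <;> nlinarith [norm_nonneg (y - q), norm_nonneg (x - p)]

variable [CompleteSpace E]

theorem hasGradientAt_half_sq_infDist {P : E → E} (hP : ∀ y, IsNearestPoint C y (P y))
    (hcont : Tendsto P (𝓝 x) (𝓝 (P x))) :
    HasGradientAt (fun y => 1 / 2 * infDist y C ^ 2) (x - P x) x := by
  have hsmall : Tendsto (fun y => ‖P y - P x‖ + ‖y - x‖) (𝓝 x) (𝓝 0) := by
    simpa using (tendsto_iff_norm_sub_tendsto_zero.1 hcont).add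
      (tendsto_iff_norm_sub_tendsto_zero.1 (tendsto_id (x := 𝓝 x)))
  refine hasGradientAt_iff_isLittleO.2 (isLittleO_iff.2 fun c hc => ?_)
  filter_upwards [hsmall.eventually (ge_mem_nhds hc)] with y hy
  calc _ ≤ (‖P y - P x‖ + ‖y - x‖) * ‖y - x‖ :=
        (hP x).abs_half_sq_infDist_sub_sub_inner_le (hP y)
    _ ≤ c * ‖y - x‖ := by gcongr

end InnerProduct

theorem gradient_half_sq_dist_general {n : ℕ} (C : Set (EuclideanSpace ℝ (Fin n)))
    (hC : IsClosed C) (hne : C.Nonempty)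
    (x p : EuclideanSpace ℝ (Fin n))
    (huniq : ∀ p' ∈ C, (∀ y ∈ C, ‖x - p'‖ ≤ ‖x - y‖) → p' = p) :
    HasGradientAt (fun y => (1 / 2 : ℝ) * (infDist y C) ^ 2) (x - p) x := by
  choose P hP using hC.exists_isNearestPoint hne
  have huniq' : ∀ q, IsNearestPoint C x q → q = p := fun q hq => huniq q hq.1 hq.2
  obtain rfl : P x = p := huniq' _ (hP x)
  exact hasGradientAt_half_sq_infDist hP (tendsto_of_isNearestPoint hC hP huniq')

/-- If `C` is a nonempty closed set and the projection of `x` onto `C` is single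
valued, equal to `p`, then `q(y) = (1/2) dist(y, C)²` has gradient `x - p` at `x`. -/
theorem gradient_half_sq_dist {n : ℕ} (C : Set (EuclideanSpace ℝ (Fin n)))
    (hC : IsClosed C) (hne : C.Nonempty)
    (x p : EuclideanSpace ℝ (Fin n))
    (hp : p ∈ C ∧ ∀ y ∈ C, ‖x - p‖ ≤ ‖x - y‖)
    (huniq : ∀ p' ∈ C, (∀ y ∈ C, ‖x - p'‖ ≤ ‖x - y‖) → p' = p) :
    HasGradientAt (fun y => (1 / 2 : ℝ) * (infDist y C) ^ 2) (x - p) x :=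
  gradient_half_sq_dist_general C hC hne x p huniq
end

section
/- Let f : ℝⁿ → ℝ be closed convex, C ⊆ ℝⁿ a closed convex set, and ρ > 0. Then x* minimizes F(x) = f(x) + (ρ/2) dist(x, C)² if and only if x* is a fixed point of the map x ↦ prox_{ρ⁻¹ f}(P_C(x)). -/
open Metric RealInnerProductSpace Filter Topology

/-!
With `v = x✶ - P x✶`, the function `x ↦ dist(x, C)²` is minorized by the affine function
`‖v‖² + 2⟪x - x✶, v⟫`, which is tight at `x✶` (the variational inequality of the projection).
If `x✶ = prox(P x✶)`, the first-order condition of the proximal problem reads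
`f x ≥ f x✶ - ρ⟪v, x - x✶⟫`; adding the two bounds shows that `x✶` minimizes `F`.
Conversely, if `x✶` minimizes `F`, then `F x✶ = f x✶ + (ρ/2)‖x✶ - P x✶‖²` is at most the
proximal objective at `T (P x✶)`, so `x✶ = T (P x✶)` by uniqueness of the proximal point.
-/

def IsMetricProjection {E : Type*} [NormedAddCommGroup E] (C : Set E) (P : E → E) : Prop :=
  ∀ x, P x ∈ C ∧ ∀ y ∈ C, ‖x - P x‖ ≤ ‖x - y‖

namespace IsMetricProjection

variable {E : Type*} [NormedAddCommGroup E] {C : Set E} {P : E → E}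

theorem infDist_eq (hP : IsMetricProjection C P) (x : E) : infDist x C = ‖x - P x‖ := by
  refine le_antisymm ?_ ((le_infDist ⟨P x, (hP x).1⟩).2 fun y hy => ?_)
  · simpa only [dist_eq_norm_sub] using infDist_le_dist_of_mem (x := x) (hP x).1
  · simpa only [dist_eq_norm_sub] using (hP x).2 y hy

variable [InnerProductSpace ℝ E]

theorem inner_le_zero (hP : IsMetricProjection C P) (hC : Convex ℝ C) (x : E) {z : E}
    (hz : z ∈ C) : ⟪x - P x, z - P x⟫ ≤ 0 := by
  refine (norm_eq_iInf_iff_real_inner_le_zero hC (hP x).1).1 ?_ z hz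
  simpa only [infDist_eq_iInf, dist_eq_norm_sub] using (hP.infDist_eq x).symm

theorem sq_norm_add_inner_le_sq_infDist (hP : IsMetricProjection C P) (hC : Convex ℝ C)
    (x y : E) : ‖x - P x‖ ^ 2 + 2 * ⟪y - x, x - P x⟫ ≤ infDist y C ^ 2 := by
  rw [hP.infDist_eq y]
  have hvar := hP.inner_le_zero hC x (hP y).1
  rw [real_inner_comm] at hvar
  have hsplit : ⟪y - P y, x - P x⟫ = ⟪y - x, x - P x⟫ + ‖x - P x‖ ^ 2 - ⟪P y - P x, x - P x⟫ := by
    rw [show y - P y = (y - x) + (x - P x) - (P y - P x) by abel, inner_sub_left,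
      inner_add_left, real_inner_self_eq_norm_sq]
  have hexp := norm_sub_sq_real (y - P y) (x - P x)
  linarith [sq_nonneg ‖y - P y - (x - P x)‖]

end IsMetricProjection

theorem ConvexOn.le_add_inner_of_forall_le_prox {E : Type*} [NormedAddCommGroup E]
    [InnerProductSpace ℝ E] {f : E → ℝ} (hf : ConvexOn ℝ Set.univ f) {ρ : ℝ} {p x₀ : E}
    (hmin : ∀ z, f x₀ + ρ / 2 * ‖x₀ - p‖ ^ 2 ≤ f z + ρ / 2 * ‖z - p‖ ^ 2) (x : E) :
    f x₀ ≤ f x + ρ * ⟪x₀ - p, x - x₀⟫ := by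
  set v := x₀ - p
  set d := x - x₀
  have hstep : ∀ t ∈ Set.Ioc (0 : ℝ) 1,
      f x₀ ≤ f x + ρ * ⟪v, d⟫ + t * (ρ / 2 * ‖d‖ ^ 2) := by
    rintro t ⟨ht0, ht1⟩
    have hconv : f (x₀ + t • d) ≤ (1 - t) * f x₀ + t * f x := by
      have h := hf.2 (Set.mem_univ x₀) (Set.mem_univ x) (show 0 ≤ 1 - t by linarith)
        ht0.le (sub_add_cancel 1 t)
      rwa [show (1 - t) • x₀ + t • x = x₀ + t • d by module, smul_eq_mul, smul_eq_mul] at h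
    have hnorm : ‖x₀ + t • d - p‖ ^ 2 = ‖v‖ ^ 2 + 2 * t * ⟪v, d⟫ + t ^ 2 * ‖d‖ ^ 2 := by
      rw [show x₀ + t • d - p = v + t • d by module, norm_add_sq_real, real_inner_smul_right,
        norm_smul, mul_pow, Real.norm_eq_abs, sq_abs]
      ring
    have hprox := hmin (x₀ + t • d)
    rw [hnorm] at hprox
    refine le_of_mul_le_mul_left ?_ ht0
    linarith
  have hlim : Tendsto (fun t : ℝ => f x + ρ * ⟪v, d⟫ + t * (ρ / 2 * ‖d‖ ^ 2)) (𝓝[>] 0)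
      (𝓝 (f x + ρ * ⟪v, d⟫)) :=
    (Continuous.tendsto' (by fun_prop) 0 _ (by simp)).mono_left nhdsWithin_le_nhds
  exact ge_of_tendsto hlim (mem_of_superset (Ioc_mem_nhdsGT one_pos) hstep)

theorem proximal_distance_fixed_point_general {n : ℕ}
    (f : EuclideanSpace ℝ (Fin n) → ℝ)
    (hf : ConvexOn ℝ Set.univ f)
    (C : Set (EuclideanSpace ℝ (Fin n)))
    (hCc : Convex ℝ C)
    (ρ : ℝ) (hρ : 0 < ρ)
    (P : EuclideanSpace ℝ (Fin n) → EuclideanSpace ℝ (Fin n))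
    (hP : ∀ x, P x ∈ C ∧ ∀ y ∈ C, ‖x - P x‖ ≤ ‖x - y‖)
    (T : EuclideanSpace ℝ (Fin n) → EuclideanSpace ℝ (Fin n))
    (hT : ∀ y z, f (T y) + (ρ / 2) * ‖T y - y‖ ^ 2 ≤ f z + (ρ / 2) * ‖z - y‖ ^ 2)
    (hTuniq : ∀ y z, f z + (ρ / 2) * ‖z - y‖ ^ 2 ≤ f (T y) + (ρ / 2) * ‖T y - y‖ ^ 2 → z = T y)
    (xstar : EuclideanSpace ℝ (Fin n)) :
    (∀ x, f xstar + (ρ / 2) * (infDist xstar C) ^ 2 ≤ f x + (ρ / 2) * (infDist x C) ^ 2)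
      ↔ T (P xstar) = xstar := by
  have hPC : IsMetricProjection C P := hP
  constructor
  · intro hmin
    refine (hTuniq (P xstar) xstar ?_).symm
    have hdist : infDist (T (P xstar)) C ≤ ‖T (P xstar) - P xstar‖ := by
      simpa only [dist_eq_norm_sub] using infDist_le_dist_of_mem (hP xstar).1
    have hdist_sq := mul_le_mul_of_nonneg_left (pow_le_pow_left₀ infDist_nonneg hdist 2)
      (half_pos hρ).le
    have hF := hmin (T (P xstar))
    rw [hPC.infDist_eq xstar] at hF
    linarith
  · intro hfix x
    have hopt := hf.le_add_inner_of_forall_le_prox (hfix ▸ hT (P xstar)) x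
    have hgrad := hPC.sq_norm_add_inner_le_sq_infDist hCc xstar x
    rw [real_inner_comm] at hgrad
    rw [hPC.infDist_eq xstar]
    linear_combination hopt + ρ / 2 * hgrad

/-- Fixed points of the proximal distance map: for closed convex `f`, a closed
convex set `C` with projection map `P`, and `ρ > 0`, with `T` the proximal map
`T y = prox_{ρ⁻¹ f}(y)` (the unique minimizer of `z ↦ f z + (ρ/2)‖z - y‖²`),
a point `x✶` minimizes `F(x) = f x + (ρ/2) dist(x, C)²` if and only if
`x✶` is a fixed point of `x ↦ T (P x)`. -/
theorem proximal_distance_fixed_point {n : ℕ}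
    (f : EuclideanSpace ℝ (Fin n) → ℝ)
    (hf : ConvexOn ℝ Set.univ f) (hfc : Continuous f)
    (C : Set (EuclideanSpace ℝ (Fin n)))
    (hC : IsClosed C) (hCc : Convex ℝ C) (hne : C.Nonempty)
    (ρ : ℝ) (hρ : 0 < ρ)
    (P : EuclideanSpace ℝ (Fin n) → EuclideanSpace ℝ (Fin n))
    (hP : ∀ x, P x ∈ C ∧ ∀ y ∈ C, ‖x - P x‖ ≤ ‖x - y‖)
    (T : EuclideanSpace ℝ (Fin n) → EuclideanSpace ℝ (Fin n))
    (hT : ∀ y z, f (T y) + (ρ / 2) * ‖T y - y‖ ^ 2 ≤ f z + (ρ / 2) * ‖z - y‖ ^ 2)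
    (hTuniq : ∀ y z, f z + (ρ / 2) * ‖z - y‖ ^ 2 ≤ f (T y) + (ρ / 2) * ‖T y - y‖ ^ 2 → z = T y)
    (xstar : EuclideanSpace ℝ (Fin n)) :
    (∀ x, f xstar + (ρ / 2) * (infDist xstar C) ^ 2 ≤ f x + (ρ / 2) * (infDist x C) ^ 2)
      ↔ T (P xstar) = xstar :=
  proximal_distance_fixed_point_general f hf C hCc ρ hρ P hP T hT hTuniq xstar
end

section
/- Let M = α I + (1−α) N with N : ℝⁿ → ℝⁿ nonexpansive and α ∈ (0,1). Then M and N have the same fixed point sets, and if M has at least one fixed point, the iteration x_{k+1} = M(x_k) converges to a fixed point of M from any starting point (Krasnosel'skii–Mann theorem). -/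
/-!
For a fixed point `q` of `N`, the identity
`‖t • a + (1 - t) • b‖² = t ‖a‖² + (1 - t) ‖b‖² - t (1 - t) ‖a - b‖²` applied to
`M x - q = α • (x - q) + (1 - α) • (N x - q)` gives
`‖M x - q‖² + α (1 - α) ‖x - N x‖² ≤ ‖x - q‖²`.
Hence the orbit stays in a ball around `q`, its distance to every fixed point is nonincreasing,
and telescoping yields `x_k - N x_k → 0`. By compactness the orbit has a cluster point, which is
a fixed point by continuity of `N`; as the distance to it is nonincreasing, the whole orbit
converges to it.
-/

open Filter Topology

theorem MapClusterPt.eq_of_tendsto {X α : Type*} [TopologicalSpace X] [T2Space X] {x y : X}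
    {F : Filter α} {u : α → X} (hx : MapClusterPt x F u) (hu : Tendsto u F (𝓝 y)) : x = y := by
  by_contra hne
  exact clusterPt_iff_not_disjoint.1 (hx.clusterPt.mono hu) (disjoint_nhds_nhds.2 hne)

theorem tendsto_of_antitone_dist_of_mapClusterPt {X : Type*} [PseudoMetricSpace X]
    {u : ℕ → X} {x : X} (hanti : Antitone fun k => dist (u k) x) (hx : MapClusterPt x atTop u) :
    Tendsto u atTop (𝓝 x) := by
  refine Metric.tendsto_atTop.2 fun ε hε => ?_
  obtain ⟨K, hK⟩ := (hx.frequently (Metric.ball_mem_nhds x hε)).exists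
  exact ⟨K, fun k hk => (hanti hk).trans_lt hK⟩

theorem tendsto_zero_of_mul_le_sub_succ {r D : ℕ → ℝ} {c : ℝ} (hc : 0 < c) (hr : ∀ k, 0 ≤ r k)
    (hD : ∀ k, 0 ≤ D k) (h : ∀ k, c * r k ≤ D k - D (k + 1)) : Tendsto r atTop (𝓝 0) := by
  have hanti : Antitone D :=
    antitone_nat_of_succ_le fun k => by nlinarith [h k, mul_nonneg hc.le (hr k)]
  have hlim : Tendsto D atTop (𝓝 (⨅ k, D k)) :=
    tendsto_atTop_ciInf hanti ⟨0, by rintro _ ⟨k, rfl⟩; exact hD k⟩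
  have hdiff : Tendsto (fun k => (D k - D (k + 1)) / c) atTop (𝓝 0) := by
    simpa using (hlim.sub (hlim.comp (tendsto_add_atTop_nat 1))).div_const c
  exact tendsto_of_tendsto_of_tendsto_of_le_of_le tendsto_const_nhds hdiff hr
    fun k => (le_div_iff₀' hc).2 (h k)

theorem norm_smul_add_one_sub_smul_sq {E : Type*} [NormedAddCommGroup E] [InnerProductSpace ℝ E]
    (t : ℝ) (a b : E) :
    ‖t • a + (1 - t) • b‖ ^ 2
      = t * ‖a‖ ^ 2 + (1 - t) * ‖b‖ ^ 2 - t * (1 - t) * ‖a - b‖ ^ 2 := by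
  rw [norm_add_sq_real, norm_sub_sq_real, norm_smul, norm_smul, real_inner_smul_left,
    real_inner_smul_right, mul_pow, mul_pow, Real.norm_eq_abs, Real.norm_eq_abs, sq_abs, sq_abs]
  ring

def averagedMap {E : Type*} [AddCommGroup E] [Module ℝ E] (α : ℝ) (N : E → E) (x : E) : E :=
  α • x + (1 - α) • N x

theorem averagedMap_eq_self_iff {E : Type*} [AddCommGroup E] [Module ℝ E] {α : ℝ} (hα : α ≠ 1)
    {N : E → E} {x : E} : averagedMap α N x = x ↔ N x = x := by
  have hsub : averagedMap α N x - x = (1 - α) • (N x - x) := by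
    unfold averagedMap; module
  rw [← sub_eq_zero, hsub, smul_eq_zero, sub_eq_zero, sub_eq_zero, or_iff_right hα.symm]

section Nonexpansive

variable {E : Type*} [NormedAddCommGroup E] [InnerProductSpace ℝ E] {α : ℝ} {N : E → E} {q : E}

theorem norm_averagedMap_sub_sq_add_le (hα : α ∈ Set.Icc (0 : ℝ) 1) (hN : LipschitzWith 1 N)
    (hq : N q = q) (x : E) :
    ‖averagedMap α N x - q‖ ^ 2 + α * (1 - α) * ‖x - N x‖ ^ 2 ≤ ‖x - q‖ ^ 2 := by
  have hNx : ‖N x - q‖ ≤ ‖x - q‖ := by simpa [hq] using hN.norm_sub_le x q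
  have hsplit : averagedMap α N x - q = α • (x - q) + (1 - α) • (N x - q) := by
    unfold averagedMap; module
  rw [hsplit, norm_smul_add_one_sub_smul_sq, sub_sub_sub_cancel_right]
  nlinarith [pow_le_pow_left₀ (norm_nonneg _) hNx 2, hα.1, hα.2]

theorem antitone_dist_iterate_averagedMap (hα : α ∈ Set.Icc (0 : ℝ) 1) (hN : LipschitzWith 1 N)
    (hq : N q = q) (x₀ : E) : Antitone fun k => dist ((averagedMap α N)^[k] x₀) q := by
  refine antitone_nat_of_succ_le fun k => ?_
  set x := (averagedMap α N)^[k] x₀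
  have hdecr := norm_averagedMap_sub_sq_add_le hα hN hq x
  have hgap : 0 ≤ α * (1 - α) * ‖x - N x‖ ^ 2 :=
    mul_nonneg (mul_nonneg hα.1 (sub_nonneg.2 hα.2)) (sq_nonneg _)
  rw [Function.iterate_succ_apply', dist_eq_norm, dist_eq_norm,
    ← pow_le_pow_iff_left₀ (norm_nonneg _) (norm_nonneg _) two_ne_zero]
  linarith

theorem tendsto_iterate_averagedMap_sub_apply (hα : α ∈ Set.Ioo (0 : ℝ) 1)
    (hN : LipschitzWith 1 N) (hq : N q = q) (x₀ : E) :
    Tendsto (fun k => (averagedMap α N)^[k] x₀ - N ((averagedMap α N)^[k] x₀)) atTop (𝓝 0) := by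
  set u := fun k => (averagedMap α N)^[k] x₀
  have hsq : Tendsto (fun k => ‖u k - N (u k)‖ ^ 2) atTop (𝓝 0) := by
    refine tendsto_zero_of_mul_le_sub_succ (D := fun k => ‖u k - q‖ ^ 2)
      (mul_pos hα.1 (sub_pos.2 hα.2)) (fun k => by positivity) (fun k => by positivity)
      fun k => ?_
    have := norm_averagedMap_sub_sq_add_le (Set.Ioo_subset_Icc_self hα) hN hq (u k)
    simp only [u, Function.iterate_succ_apply']
    linarith
  rw [tendsto_zero_iff_norm_tendsto_zero]
  simpa [Real.sqrt_sq (norm_nonneg _)] using hsq.sqrt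

theorem exists_tendsto_iterate_averagedMap [ProperSpace E] (hα : α ∈ Set.Ioo (0 : ℝ) 1)
    (hN : LipschitzWith 1 N) (hq : N q = q) (x₀ : E) :
    ∃ x, N x = x ∧ Tendsto (fun k => (averagedMap α N)^[k] x₀) atTop (𝓝 x) := by
  have hα' := Set.Ioo_subset_Icc_self hα
  set u := fun k => (averagedMap α N)^[k] x₀
  have hball : ∀ k, u k ∈ Metric.closedBall q (dist x₀ q) := fun k =>
    antitone_dist_iterate_averagedMap hα' hN hq x₀ (Nat.zero_le k)
  obtain ⟨x, -, hx⟩ := (isCompact_closedBall q (dist x₀ q)).exists_mapClusterPt_of_frequently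
    (Frequently.of_forall (f := atTop) hball)
  have hzero : x - N x = 0 :=
    (hx.continuousAt_comp (continuous_id.sub hN.continuous).continuousAt).eq_of_tendsto
      (tendsto_iterate_averagedMap_sub_apply hα hN hq x₀)
  have hfix : N x = x := (sub_eq_zero.1 hzero).symm
  exact ⟨x, hfix, tendsto_of_antitone_dist_of_mapClusterPt
    (antitone_dist_iterate_averagedMap hα' hN hfix x₀) hx⟩

end Nonexpansive

/-- Krasnosel'skii–Mann: if `M = α I + (1-α) N` with `N` nonexpansive and
`α ∈ (0,1)`, then `M` and `N` share fixed points, and if `M` has a fixed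
point then the iteration `x_{k+1} = M(x_k)` converges to a fixed point of `M`
from any starting point. -/
theorem krasnoselskii_mann {n : ℕ}
    (M N : EuclideanSpace ℝ (Fin n) → EuclideanSpace ℝ (Fin n))
    (α : ℝ) (hα : α ∈ Set.Ioo (0 : ℝ) 1)
    (hN : ∀ x y, ‖N x - N y‖ ≤ ‖x - y‖)
    (hM : ∀ x, M x = α • x + (1 - α) • N x) :
    (∀ x, M x = x ↔ N x = x) ∧
      ((∃ x, M x = x) →
        ∀ x0, ∃ xstar, M xstar = xstar ∧
          Tendsto (fun k => M^[k] x0) atTop (𝓝 xstar)) := by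
  obtain rfl : M = averagedMap α N := funext hM
  have hfix_iff : ∀ x, averagedMap α N x = x ↔ N x = x := fun _ =>
    averagedMap_eq_self_iff hα.2.ne
  have hNlip : LipschitzWith 1 N := lipschitzWith_iff_norm_sub_le.2 fun x y => by
    simpa using hN x y
  refine ⟨hfix_iff, ?_⟩
  rintro ⟨p, hp⟩ x0
  obtain ⟨xstar, hxstar, hlim⟩ :=
    exists_tendsto_iterate_averagedMap hα hNlip ((hfix_iff p).1 hp) x0
  exact ⟨xstar, (hfix_iff xstar).2 hxstar, hlim⟩
end

section
/- Let f : ℝⁿ → ℝ be continuous and coercive, let q(x) = (1/(2m)) Σᵢ dist(x, Cᵢ)² for closed sets Cᵢ with nonempty intersection C = ∩ᵢ Cᵢ, and for each ρ > 0 let x_ρ minimize f + ρq. Then any cluster point of x_ρ as ρ → ∞ lies in C and minimizes f over C. -/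
open Metric Filter Topology

/-!
Along a path of minimizers `x ρ` of `f + ρ q`, the penalty `ρ q (x ρ)` exceeds `ρ q y` by at
most `f y - f (x ρ)`. Near a cluster point `x̄`, lower semicontinuity bounds `f (x ρ)` below, so
`q (x ρ)` cannot stay above `min q` by a fixed amount as `ρ → ∞`: hence `x̄` minimizes `q`.
Comparing with a minimizer `y` of `q` gives `f (x ρ) ≤ f y`, which passes to `x̄` because the
sublevel sets of `f` are closed. For the squared-distance penalty the minimizers of `q` are
exactly the points of `⋂ i, C i`.
-/

def IsPenaltyPath {X : Type*} (f q : X → ℝ) (x : ℝ → X) : Prop :=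
  ∀ ρ > (0 : ℝ), ∀ y, f (x ρ) + ρ * q (x ρ) ≤ f y + ρ * q y

namespace IsPenaltyPath

variable {X : Type*} [TopologicalSpace X] {f q : X → ℝ} {x : ℝ → X} {xbar : X}

theorem penalty_le_of_mapClusterPt (hx : IsPenaltyPath f q x) (hf : LowerSemicontinuous f)
    (hq : LowerSemicontinuous q) (hcluster : MapClusterPt xbar atTop x) (y : X) :
    q xbar ≤ q y := by
  by_contra! hlt
  set δ := q xbar - q y
  have hδpos : 0 < δ := sub_pos.2 hlt
  have hnear : ∀ᶠ z in 𝓝 xbar, f xbar - 1 < f z ∧ q xbar - δ / 2 < q z :=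
    (hf xbar _ (by linarith)).and (hq xbar _ (by linarith))
  have hlarge : ∀ᶠ ρ in atTop, 0 < ρ ∧ 2 * (f y - f xbar + 1) < ρ * δ :=
    (eventually_gt_atTop 0).and
      ((tendsto_id.atTop_mul_const hδpos).eventually_gt_atTop _)
  obtain ⟨ρ, ⟨hfρ, hqρ⟩, hρ, hρδ⟩ := ((hcluster.frequently hnear).and_eventually hlarge).exists
  have hmin := hx ρ hρ y
  nlinarith [mul_lt_mul_of_pos_left hqρ hρ]

theorem objective_le_of_mapClusterPt (hx : IsPenaltyPath f q x) (hf : LowerSemicontinuous f)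
    (hcluster : MapClusterPt xbar atTop x) {y : X} (hy : ∀ z, q y ≤ q z) : f xbar ≤ f y := by
  refine (hf.isClosed_preimage (f y)).mem_of_mapClusterPt hcluster ?_
  filter_upwards [eventually_gt_atTop 0] with ρ hρ
  show f (x ρ) ≤ f y
  have hmin := hx ρ hρ y
  nlinarith [mul_le_mul_of_nonneg_left (hy (x ρ)) hρ.le]

end IsPenaltyPath

theorem sum_sq_infDist_eq_zero_iff {ι E : Type*} [Fintype ι] [PseudoMetricSpace E]
    {C : ι → Set E} (hclosed : ∀ i, IsClosed (C i)) (hne : ∀ i, (C i).Nonempty) (x : E) :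
    ∑ i, infDist x (C i) ^ 2 = 0 ↔ x ∈ ⋂ i, C i := by
  simp only [Finset.sum_eq_zero_iff_of_nonneg (fun i _ => sq_nonneg (infDist x (C i))),
    Finset.mem_univ, true_implies, pow_eq_zero_iff two_ne_zero, Set.mem_iInter]
  exact forall_congr' fun i => ((hclosed i).mem_iff_infDist_zero (hne i)).symm

theorem penalty_method_cluster_points_general {n m : ℕ} (hm : 0 < m)
    (f : EuclideanSpace ℝ (Fin n) → ℝ)
    (hfc : Continuous f)
    (C : Fin m → Set (EuclideanSpace ℝ (Fin n)))
    (hclosed : ∀ i, IsClosed (C i))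
    (hne : (⋂ i, C i).Nonempty)
    (q : EuclideanSpace ℝ (Fin n) → ℝ)
    (hq : ∀ x, q x = (1 / (2 * (m : ℝ))) * ∑ i, (infDist x (C i)) ^ 2)
    (xρ : ℝ → EuclideanSpace ℝ (Fin n))
    (hmin : ∀ ρ > (0 : ℝ), ∀ x, f (xρ ρ) + ρ * q (xρ ρ) ≤ f x + ρ * q x)
    (xbar : EuclideanSpace ℝ (Fin n))
    (hcluster : MapClusterPt xbar atTop xρ) :
    xbar ∈ ⋂ i, C i ∧ ∀ y ∈ ⋂ i, C i, f xbar ≤ f y := by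
  have hpath : IsPenaltyPath f q xρ := hmin
  have hq_cont : Continuous q := by
    rw [show q = _ from funext hq]
    fun_prop
  have hq_nonneg : ∀ x, 0 ≤ q x := fun x => by rw [hq]; positivity
  have hq_eq_zero : ∀ x, q x = 0 ↔ x ∈ ⋂ i, C i := fun x => by
    rw [hq, mul_eq_zero, or_iff_right (by positivity),
      sum_sq_infDist_eq_zero_iff hclosed (fun i => hne.mono (Set.iInter_subset C i))]
  have hq_min : ∀ y ∈ ⋂ i, C i, ∀ z, q y ≤ q z := fun y hy z =>
    ((hq_eq_zero y).2 hy).symm ▸ hq_nonneg z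
  obtain ⟨y₀, hy₀⟩ := hne
  have hxbar : xbar ∈ ⋂ i, C i := (hq_eq_zero xbar).1 <| le_antisymm
    (((hq_eq_zero y₀).2 hy₀) ▸ hpath.penalty_le_of_mapClusterPt hfc.lowerSemicontinuous
      hq_cont.lowerSemicontinuous hcluster y₀)
    (hq_nonneg xbar)
  exact ⟨hxbar, fun y hy =>
    hpath.objective_le_of_mapClusterPt hfc.lowerSemicontinuous hcluster (hq_min y hy)⟩

/-- Penalty method convergence: let `f` be continuous and coercive, let
`q(x) = (1/(2m)) ∑ᵢ dist(x, Cᵢ)²` for closed sets `Cᵢ` with nonempty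
intersection, and for each `ρ > 0` let `xρ` minimize `f + ρ q`. Then any
cluster point of `ρ ↦ x ρ` as `ρ → ∞` lies in the intersection and minimizes
`f` over the intersection. -/
theorem penalty_method_cluster_points {n m : ℕ} (hm : 0 < m)
    (f : EuclideanSpace ℝ (Fin n) → ℝ)
    (hfc : Continuous f)
    (hcoercive : Tendsto f (cocompact _) atTop)
    (C : Fin m → Set (EuclideanSpace ℝ (Fin n)))
    (hclosed : ∀ i, IsClosed (C i))
    (hne : (⋂ i, C i).Nonempty)
    (q : EuclideanSpace ℝ (Fin n) → ℝ)
    (hq : ∀ x, q x = (1 / (2 * (m : ℝ))) * ∑ i, (infDist x (C i)) ^ 2)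
    (xρ : ℝ → EuclideanSpace ℝ (Fin n))
    (hmin : ∀ ρ > (0 : ℝ), ∀ x, f (xρ ρ) + ρ * q (xρ ρ) ≤ f x + ρ * q x)
    (xbar : EuclideanSpace ℝ (Fin n))
    (hcluster : MapClusterPt xbar atTop xρ) :
    xbar ∈ ⋂ i, C i ∧ ∀ y ∈ ⋂ i, C i, f xbar ≤ f y :=
  penalty_method_cluster_points_general hm f hfc C hclosed hne q hq xρ hmin xbar hcluster
end

section
/- Let y ∈ ℝⁿ with at least one positive component, and let S = {x ∈ ℝⁿ : ‖x‖ = 1, x ≥ 0}. Then the projection of y onto S is y₊/‖y₊‖, where y₊ denotes the componentwise positive part of y. -/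
open scoped RealInnerProductSpace

/-! Among vectors `x` of a fixed norm, `‖y - x‖` is smallest when `⟪y, x⟫` is largest. For unit
`x ≥ 0` we have `⟪y, x⟫ ≤ ⟪y₊, x⟫ ≤ ‖y₊‖` by Cauchy–Schwarz, and `y₊ / ‖y₊‖` attains this bound
because `⟪y, y₊⟫ = ‖y₊‖²`. -/

theorem norm_sub_le_norm_sub_of_inner_le {E : Type*} [NormedAddCommGroup E]
    [InnerProductSpace ℝ E] {y u x : E} (hux : ‖u‖ = ‖x‖) (h : ⟪y, x⟫ ≤ ⟪y, u⟫) :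
    ‖y - u‖ ≤ ‖y - x‖ := by
  refine (pow_le_pow_iff_left₀ (norm_nonneg _) (norm_nonneg _) two_ne_zero).mp ?_
  rw [norm_sub_sq_real, norm_sub_sq_real, hux]
  linarith

namespace EuclideanSpace

variable {ι : Type*} {y yplus : EuclideanSpace ℝ ι}

theorem posPart_ne_zero (hyplus : ∀ i, yplus i = max (y i) 0) (hpos : ∃ i, 0 < y i) :
    yplus ≠ 0 := by
  obtain ⟨i, hi⟩ := hpos
  intro h
  have : max (y i) 0 = 0 := by rw [← hyplus i, h]; rfl
  exact hi.ne' (by simpa [hi.le] using this)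

variable [Fintype ι]

theorem real_inner_eq_sum (x y : EuclideanSpace ℝ ι) : ⟪x, y⟫ = ∑ i, x i * y i := by
  simp [PiLp.inner_apply, mul_comm]

theorem inner_posPart_eq_norm_sq (hyplus : ∀ i, yplus i = max (y i) 0) :
    ⟪y, yplus⟫ = ‖yplus‖ ^ 2 := by
  rw [← real_inner_self_eq_norm_sq, real_inner_eq_sum, real_inner_eq_sum]
  refine Finset.sum_congr rfl fun i _ => ?_
  rcases le_total (y i) 0 with h | h <;> simp [hyplus i, h]

theorem inner_le_inner_posPart (hyplus : ∀ i, yplus i = max (y i) 0)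
    {x : EuclideanSpace ℝ ι} (hx : ∀ i, 0 ≤ x i) : ⟪y, x⟫ ≤ ⟪yplus, x⟫ := by
  rw [real_inner_eq_sum, real_inner_eq_sum]
  exact Finset.sum_le_sum fun i _ =>
    mul_le_mul_of_nonneg_right (hyplus i ▸ le_max_left _ _) (hx i)

end EuclideanSpace

/-- Projection onto the intersection of the unit sphere and the nonnegative
orthant: if some component of `y` is positive, the projection is `y₊ / ‖y₊‖`. -/
theorem sphere_orthant_projection_pos {n : ℕ}
    (y : EuclideanSpace ℝ (Fin n)) (hpos : ∃ i, 0 < y i)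
    (yplus : EuclideanSpace ℝ (Fin n)) (hyplus : ∀ i, yplus i = max (y i) 0) :
    (‖(‖yplus‖⁻¹ • yplus : EuclideanSpace ℝ (Fin n))‖ = 1 ∧
        ∀ i, 0 ≤ (‖yplus‖⁻¹ • yplus : EuclideanSpace ℝ (Fin n)) i) ∧
      ∀ x : EuclideanSpace ℝ (Fin n), ‖x‖ = 1 → (∀ i, 0 ≤ x i) →
        ‖y - ‖yplus‖⁻¹ • yplus‖ ≤ ‖y - x‖ := by
  have hne := EuclideanSpace.posPart_ne_zero hyplus hpos
  have hunit : ‖(‖yplus‖⁻¹ • yplus : EuclideanSpace ℝ (Fin n))‖ = 1 := norm_smul_inv_norm hne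
  have hinner : ⟪y, ‖yplus‖⁻¹ • yplus⟫ = ‖yplus‖ := by
    rw [real_inner_smul_right, EuclideanSpace.inner_posPart_eq_norm_sq hyplus]
    field_simp [norm_ne_zero_iff.mpr hne]
  refine ⟨⟨hunit, fun i => ?_⟩, fun x hx hx0 => ?_⟩
  · simp only [PiLp.smul_apply, smul_eq_mul, hyplus i]
    positivity
  · refine norm_sub_le_norm_sub_of_inner_le (hunit.trans hx.symm) ?_
    calc ⟪y, x⟫ ≤ ⟪yplus, x⟫ := EuclideanSpace.inner_le_inner_posPart hyplus hx0
      _ ≤ ‖yplus‖ * ‖x‖ := real_inner_le_norm _ _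
      _ = ⟪y, ‖yplus‖⁻¹ • yplus⟫ := by rw [hx, mul_one, hinner]
end

section
/- Let y ∈ ℝⁿ have all components negative, let i be an index attaining the maximum (least negative) component, and S = {x ∈ ℝⁿ : ‖x‖ = 1, x ≥ 0}. Then the standard unit vector e_i minimizes ‖y − x‖ over x ∈ S. -/
/-!
For `x` on the sphere, `‖y - x‖² = ‖y‖² + 1 - 2⟪y, x⟫`, so it suffices to show that `e_i`
maximizes `⟪y, x⟫`. For `x ≥ 0` with `‖x‖ = 1` we have `∑ x_j ≥ ‖x‖ = 1`, hence
`⟪y, x⟫ ≤ y_i ∑ x_j ≤ y_i = ⟪y, e_i⟫` because `y_i` is the largest entry of `y` and is negative.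
-/

open Finset

lemma norm_sub_le_norm_sub_of_norm_eq_of_inner_le {E : Type*} [NormedAddCommGroup E]
    [InnerProductSpace ℝ E] {y e x : E} (hnorm : ‖e‖ = ‖x‖) (hinner : inner ℝ y x ≤ inner ℝ y e) :
    ‖y - e‖ ≤ ‖y - x‖ := by
  refine (sq_le_sq₀ (norm_nonneg _) (norm_nonneg _)).mp ?_
  rw [norm_sub_sq_real, norm_sub_sq_real, hnorm]
  linarith

namespace EuclideanSpace

variable {ι : Type*} [Fintype ι]

lemma norm_le_sum_of_nonneg {x : EuclideanSpace ℝ ι} (hx : ∀ j, 0 ≤ x j) : ‖x‖ ≤ ∑ j, x j := by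
  refine (sq_le_sq₀ (norm_nonneg _) (sum_nonneg fun j _ ↦ hx j)).mp ?_
  rw [real_norm_sq_eq]
  exact sum_sq_le_sq_sum_of_nonneg fun j _ ↦ hx j

lemma inner_le_mul_sum_of_le {y x : EuclideanSpace ℝ ι} {i : ι} (hi : ∀ j, y j ≤ y i)
    (hx : ∀ j, 0 ≤ x j) : inner ℝ y x ≤ y i * ∑ j, x j := by
  simp only [PiLp.inner_apply, RCLike.inner_apply, conj_trivial, mul_sum]
  refine sum_le_sum fun j _ ↦ ?_
  rw [mul_comm]
  exact mul_le_mul_of_nonneg_right (hi j) (hx j)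

end EuclideanSpace

/-- Projection onto the intersection of the unit sphere and the nonnegative
orthant: if all components of `y` are negative and `i` attains the least
negative component, then the standard unit vector `e_i` minimizes `‖y - x‖`
over the constraint set. -/
theorem sphere_orthant_projection_neg {n : ℕ}
    (y : EuclideanSpace ℝ (Fin n)) (hneg : ∀ j, y j < 0)
    (i : Fin n) (hi : ∀ j, y j ≤ y i)
    (e : EuclideanSpace ℝ (Fin n)) (he : ∀ j, e j = if j = i then 1 else 0) :
    (‖e‖ = 1 ∧ ∀ j, 0 ≤ e j) ∧
      ∀ x : EuclideanSpace ℝ (Fin n), ‖x‖ = 1 → (∀ j, 0 ≤ x j) →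
        ‖y - e‖ ≤ ‖y - x‖ := by
  obtain rfl : e = EuclideanSpace.single i 1 := by
    ext j
    simp [he]
  have he_norm : ‖EuclideanSpace.single i (1 : ℝ)‖ = 1 := by simp
  refine ⟨⟨he_norm, fun j ↦ ?_⟩, fun x hx hx0 ↦ ?_⟩
  · rw [PiLp.single_apply]
    split_ifs <;> norm_num
  refine norm_sub_le_norm_sub_of_norm_eq_of_inner_le (he_norm.trans hx.symm) ?_
  have hsum : 1 ≤ ∑ j, x j := hx ▸ EuclideanSpace.norm_le_sum_of_nonneg hx0
  calc inner ℝ y x ≤ y i * ∑ j, x j := EuclideanSpace.inner_le_mul_sum_of_le hi hx0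
    _ ≤ y i * 1 := mul_le_mul_of_nonpos_left hsum (hneg i).le
    _ = inner ℝ y (EuclideanSpace.single i 1) := by simp [EuclideanSpace.inner_single_right]
end

section
/- The 5×5 Horn matrix M with entries M_{ii} = 1 and off-diagonal pattern M = [[1,−1,1,1,−1],[−1,1,−1,1,1],[1,−1,1,−1,1],[1,1,−1,1,−1],[−1,1,1,−1,1]] is copositive: xᵗMx ≥ 0 for all x ≥ 0. -/
/-!
Expanding, `xᵀ H x = (x₀ - x₁ + x₂ + x₃ - x₄)² + 4 x₁ x₃ + 4 x₂ (x₄ - x₃)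
= (x₀ - x₁ + x₂ - x₃ + x₄)² + 4 x₁ x₄ + 4 x₀ (x₃ - x₄)`.
For `x ≥ 0` the first decomposition is a sum of nonnegative terms when `x₃ ≤ x₄`,
the second when `x₄ ≤ x₃`.
-/

open Matrix

section Horn

variable (R : Type*) [CommRing R]

def hornMatrix : Matrix (Fin 5) (Fin 5) R :=
  !![1, -1, 1, 1, -1;
     -1, 1, -1, 1, 1;
     1, -1, 1, -1, 1;
     1, 1, -1, 1, -1;
     -1, 1, 1, -1, 1]

variable {R}

lemma hornMatrix_quadForm_eq_left (x : Fin 5 → R) :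
    x ⬝ᵥ hornMatrix R *ᵥ x =
      (x 0 - x 1 + x 2 + x 3 - x 4) ^ 2 + 4 * (x 1 * x 3) + 4 * (x 2 * (x 4 - x 3)) := by
  simp only [hornMatrix, dotProduct, mulVec, Fin.sum_univ_five, of_apply, cons_val', cons_val,
    empty_val', cons_val_fin_one]
  ring

lemma hornMatrix_quadForm_eq_right (x : Fin 5 → R) :
    x ⬝ᵥ hornMatrix R *ᵥ x =
      (x 0 - x 1 + x 2 - x 3 + x 4) ^ 2 + 4 * (x 1 * x 4) + 4 * (x 0 * (x 3 - x 4)) := by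
  rw [hornMatrix_quadForm_eq_left]
  ring

theorem hornMatrix_copositive [LinearOrder R] [IsStrictOrderedRing R]
    (x : Fin 5 → R) (hx : ∀ i, 0 ≤ x i) : 0 ≤ x ⬝ᵥ hornMatrix R *ᵥ x := by
  rcases le_total (x 3) (x 4) with h | h
  · rw [hornMatrix_quadForm_eq_left]
    have := mul_nonneg (hx 2) (sub_nonneg.2 h)
    have := mul_nonneg (hx 1) (hx 3)
    positivity
  · rw [hornMatrix_quadForm_eq_right]
    have := mul_nonneg (hx 0) (sub_nonneg.2 h)
    have := mul_nonneg (hx 1) (hx 4)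
    positivity

end Horn

/-- The 5×5 Horn matrix is copositive. -/
theorem horn_matrix_copositive
    (M : Matrix (Fin 5) (Fin 5) ℝ)
    (hM : M = !![1, -1, 1, 1, -1;
                 -1, 1, -1, 1, 1;
                 1, -1, 1, -1, 1;
                 1, 1, -1, 1, -1;
                 -1, 1, 1, -1, 1]) :
    ∀ x : Fin 5 → ℝ, (∀ i, 0 ≤ x i) → 0 ≤ x ⬝ᵥ M *ᵥ x := by
  subst hM
  exact hornMatrix_copositive
end
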